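/- arXiv:2002.08733 — 2 statements merged into one kernel-verified Lean document; each statement's English description precedes it below -/
import Mathlib

section
/- Covariant transformation of curls (Piola identity): let Φ(x̂) = A x̂ + b be an invertible affine map on ℝ³ and let φ̂: ℝ³ → ℝ³ be a continuously differentiable vector field. Define φ(x) = A^{-T} φ̂(Φ^{-1}(x)). Then for all x, (∇×φ)(x) = (det A)^{-1} A (∇̂×φ̂)(Φ^{-1}(x)). -/
/-!
By the chain rule the Jacobian of `φ` at `x` is `A⁻ᵀ J A⁻¹`, where `J` is the Jacobian of `φ̂` at
`Φ⁻¹ x`. The curl is the axial vector of the antisymmetric part of the Jacobian, and axial vectors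
transform as `axial (Mᵀ J M) = adj M • axial J`; finally `adj A⁻¹ = (det A)⁻¹ A`.
-/

open Matrix

/-- Partial derivative in direction `i`. -/
noncomputable def pd (i : Fin 3) (f : (Fin 3 → ℝ) → ℝ) (x : Fin 3 → ℝ) : ℝ :=
  fderiv ℝ f x (Pi.single i 1)

/-- The curl of a vector field on `ℝ³`. -/
noncomputable def curl (v : (Fin 3 → ℝ) → (Fin 3 → ℝ)) (x : Fin 3 → ℝ) : Fin 3 → ℝ :=
  ![pd 1 (fun y => v y 2) x - pd 2 (fun y => v y 1) x,
    pd 2 (fun y => v y 0) x - pd 0 (fun y => v y 2) x,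
    pd 0 (fun y => v y 1) x - pd 1 (fun y => v y 0) x]

namespace Matrix

theorem adjugate_nonsing_inv {n K : Type*} [Fintype n] [DecidableEq n] [Nontrivial n] [Field K]
    (A : Matrix n n K) : adjugate A⁻¹ = A.det⁻¹ • A := by
  by_cases hA : A.det = 0
  · rw [nonsing_inv_apply_not_isUnit A (by simpa using hA), adjugate_zero, hA]
    simp
  · have hA' : IsUnit A⁻¹.det := by simpa [det_nonsing_inv] using hA
    calc adjugate A⁻¹ = A⁻¹.det • A⁻¹⁻¹ := by
          rw [nonsing_inv_apply _ hA', smul_smul, IsUnit.mul_val_inv, one_smul]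
      _ = A.det⁻¹ • A := by
          rw [nonsing_inv_nonsing_inv A (isUnit_iff_ne_zero.mpr hA), det_nonsing_inv,
            Ring.inverse_eq_inv']

variable {R : Type*} [CommRing R]

/-- The vector `w` with `(J - Jᵀ) y = w ×₃ y`. -/
def axialVector (J : Matrix (Fin 3) (Fin 3) R) : Fin 3 → R :=
  ![J 2 1 - J 1 2, J 0 2 - J 2 0, J 1 0 - J 0 1]

theorem axialVector_transpose_mul_mul (M J : Matrix (Fin 3) (Fin 3) R) :
    axialVector (Mᵀ * J * M) = M.adjugate *ᵥ axialVector J := by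
  ext i
  fin_cases i <;>
  · simp [axialVector, adjugate_fin_three, mulVec, dotProduct, Fin.sum_univ_three, mul_apply]
    ring

end Matrix

noncomputable def jacobian (v : (Fin 3 → ℝ) → (Fin 3 → ℝ)) (x : Fin 3 → ℝ) :
    Matrix (Fin 3) (Fin 3) ℝ :=
  Matrix.of fun k l => pd l (fun y => v y k) x

theorem curl_eq_axialVector_jacobian (v : (Fin 3 → ℝ) → (Fin 3 → ℝ)) (x : Fin 3 → ℝ) :
    curl v x = axialVector (jacobian v x) := rfl

theorem jacobian_eq_toMatrix' {v : (Fin 3 → ℝ) → (Fin 3 → ℝ)} {x : Fin 3 → ℝ}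
    (hv : DifferentiableAt ℝ v x) :
    jacobian v x = LinearMap.toMatrix' (fderiv ℝ v x : (Fin 3 → ℝ) →ₗ[ℝ] Fin 3 → ℝ) := by
  ext k l
  simp [jacobian, pd, fderiv_apply hv]

theorem jacobian_affine_pullback (N M : Matrix (Fin 3) (Fin 3) ℝ) (b : Fin 3 → ℝ)
    {v : (Fin 3 → ℝ) → (Fin 3 → ℝ)} {x : Fin 3 → ℝ} (hv : DifferentiableAt ℝ v (M *ᵥ (x - b))) :
    jacobian (fun y => N *ᵥ v (M *ᵥ (y - b))) x = N * jacobian v (M *ᵥ (x - b)) * M := by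
  let LN := LinearMap.toContinuousLinearMap (toLin' N)
  let LM := LinearMap.toContinuousLinearMap (toLin' M)
  have hshift : HasFDerivAt (fun y => M *ᵥ (y - b)) LM x := by
    simpa [LM, mulVec_sub] using LM.hasFDerivAt.sub_const (M *ᵥ b)
  have hpull : HasFDerivAt (fun y => N *ᵥ v (M *ᵥ (y - b)))
      (LN.comp ((fderiv ℝ v (M *ᵥ (x - b))).comp LM)) x :=
    LN.hasFDerivAt.comp x (hv.hasFDerivAt.comp x hshift)
  rw [jacobian_eq_toMatrix' hpull.differentiableAt, hpull.fderiv, jacobian_eq_toMatrix' hv]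
  simp [LN, LM, LinearMap.toMatrix'_comp, Matrix.mul_assoc]

theorem curl_covariant_transform_general
    (A : Matrix (Fin 3) (Fin 3) ℝ) (b : Fin 3 → ℝ)
    (φhat : (Fin 3 → ℝ) → (Fin 3 → ℝ)) (hφ : ContDiff ℝ 1 φhat)
    (φ : (Fin 3 → ℝ) → (Fin 3 → ℝ))
    (hmap : ∀ x, φ x = (A⁻¹)ᵀ.mulVec (φhat (A⁻¹.mulVec (x - b)))) (x : Fin 3 → ℝ) :
    curl φ x = (A.det)⁻¹ • A.mulVec (curl φhat (A⁻¹.mulVec (x - b))) := by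
  obtain rfl : φ = fun y => (A⁻¹)ᵀ *ᵥ φhat (A⁻¹ *ᵥ (y - b)) := funext hmap
  rw [curl_eq_axialVector_jacobian,
    jacobian_affine_pullback _ _ _ (hφ.differentiable one_ne_zero _), axialVector_transpose_mul_mul,
    adjugate_nonsing_inv, smul_mulVec, curl_eq_axialVector_jacobian]

/-- Piola identity: the curl of a covariantly transformed field transforms
contravariantly. -/
theorem curl_covariant_transform
    (A : Matrix (Fin 3) (Fin 3) ℝ) (b : Fin 3 → ℝ) (hA : IsUnit A.det)
    (φhat : (Fin 3 → ℝ) → (Fin 3 → ℝ)) (hφ : ContDiff ℝ 1 φhat)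
    (φ : (Fin 3 → ℝ) → (Fin 3 → ℝ))
    (hmap : ∀ x, φ x = (A⁻¹)ᵀ.mulVec (φhat (A⁻¹.mulVec (x - b)))) (x : Fin 3 → ℝ) :
    curl φ x = (A.det)⁻¹ • A.mulVec (curl φhat (A⁻¹.mulVec (x - b))) :=
  curl_covariant_transform_general A b φhat hφ φ hmap x
end

section
/- Energy conservation of the semi-discrete central-flux DG system: let M_ε, M_μ, M_{μ/α} be symmetric positive-definite matrices and C, C_F arbitrary real matrices. If (e(t), h(t), h_s(t)) solves M_ε e' = C h + C_F h_s, M_μ h' = -Cᵀ e, M_{μ/α} h_s' = -C_Fᵀ e, then the discrete energy E(t) = ½(eᵀ M_ε e + hᵀ M_μ h + h_sᵀ M_{μ/α} h_s) is constant in time. -/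
/-!
By symmetry of the mass matrices, `dE/dt = eᵀ Mε e' + hᵀ Mμ h' + h_sᵀ M_{μ/α} h_s'`; substituting
the equations gives `eᵀ (C h + C_F h_s) - hᵀ Cᵀ e - h_sᵀ C_Fᵀ e = 0`, because the coupling operator
is skew-adjoint.
-/

open Matrix

theorem Matrix.PosDef.isSymm {ι R : Type*} [Fintype ι] [CommRing R] [PartialOrder R] [StarRing R]
    [TrivialStar R] {M : Matrix ι ι R} (hM : M.PosDef) : M.IsSymm :=
  isHermitian_iff_isSymm.mp hM.isHermitian

section

variable {𝕜 ι : Type*} [NontriviallyNormedField 𝕜] [Fintype ι]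
  {u v : 𝕜 → ι → 𝕜} {u' v' : ι → 𝕜} {t : 𝕜}

theorem HasDerivAt.dotProduct (hu : HasDerivAt u u' t) (hv : HasDerivAt v v' t) :
    HasDerivAt (fun s ↦ u s ⬝ᵥ v s) (u' ⬝ᵥ v t + u t ⬝ᵥ v') t := by
  have hui := hasDerivAt_pi.1 hu
  have hvi := hasDerivAt_pi.1 hv
  have := HasDerivAt.fun_sum (u := Finset.univ) fun i _ ↦ (hui i).mul (hvi i)
  simp only [Pi.mul_apply, Finset.sum_add_distrib] at this
  exact this

theorem HasDerivAt.mulVec {κ : Type*} [Fintype κ] (M : Matrix κ ι 𝕜)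
    (hv : HasDerivAt v v' t) :
    HasDerivAt (fun s ↦ M *ᵥ v s) (M *ᵥ v') t :=
  hasDerivAt_pi.2 fun i ↦ by
    have := (hasDerivAt_const t (M i)).dotProduct hv
    rwa [zero_dotProduct, zero_add] at this

theorem HasDerivAt.dotProduct_mulVec_self {M : Matrix ι ι 𝕜} (hM : M.IsSymm)
    (hu : HasDerivAt u u' t) :
    HasDerivAt (fun s ↦ u s ⬝ᵥ M *ᵥ u s) (2 * (u t ⬝ᵥ M *ᵥ u')) t := by
  convert hu.dotProduct (hu.mulVec M) using 1
  rw [← dotProduct_transpose_mulVec, hM.eq]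
  ring

end

/-- Energy conservation of the semi-discrete central-flux DG system. -/
theorem dg_energy_conservation {n m k : ℕ}
    (Mε : Matrix (Fin n) (Fin n) ℝ) (Mμ : Matrix (Fin m) (Fin m) ℝ)
    (Ms : Matrix (Fin k) (Fin k) ℝ)
    (hMε : Mε.PosDef) (hMμ : Mμ.PosDef) (hMs : Ms.PosDef)
    (C : Matrix (Fin n) (Fin m) ℝ) (CF : Matrix (Fin n) (Fin k) ℝ)
    (e : ℝ → Fin n → ℝ) (h : ℝ → Fin m → ℝ) (hs : ℝ → Fin k → ℝ)
    (he : Differentiable ℝ e) (hh : Differentiable ℝ h) (hhs : Differentiable ℝ hs)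
    (heq : ∀ t, Mε.mulVec (deriv e t) = C.mulVec (h t) + CF.mulVec (hs t))
    (hheq : ∀ t, Mμ.mulVec (deriv h t) = -(Cᵀ.mulVec (e t)))
    (hseq : ∀ t, Ms.mulVec (deriv hs t) = -((CF)ᵀ.mulVec (e t))) :
    ∀ t t' : ℝ,
      (1 / 2) * (e t ⬝ᵥ Mε.mulVec (e t) + h t ⬝ᵥ Mμ.mulVec (h t) +
          hs t ⬝ᵥ Ms.mulVec (hs t)) =
      (1 / 2) * (e t' ⬝ᵥ Mε.mulVec (e t') + h t' ⬝ᵥ Mμ.mulVec (h t') +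
          hs t' ⬝ᵥ Ms.mulVec (hs t')) := by
  have hE : ∀ t, HasDerivAt
      (fun s ↦ (1 / 2) * (e s ⬝ᵥ Mε *ᵥ e s + h s ⬝ᵥ Mμ *ᵥ h s + hs s ⬝ᵥ Ms *ᵥ hs s)) 0 t := by
    intro t
    have hdε := (he t).hasDerivAt.dotProduct_mulVec_self hMε.isSymm
    have hdμ := (hh t).hasDerivAt.dotProduct_mulVec_self hMμ.isSymm
    have hds := (hhs t).hasDerivAt.dotProduct_mulVec_self hMs.isSymm
    refine (((hdε.add hdμ).add hds).const_mul (1 / 2 : ℝ)).congr_deriv ?_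
    rw [heq, hheq, hseq, dotProduct_add, dotProduct_neg, dotProduct_neg,
      dotProduct_transpose_mulVec, dotProduct_transpose_mulVec]
    ring
  intro t t'
  exact is_const_of_deriv_eq_zero (fun s ↦ (hE s).differentiableAt) (fun s ↦ (hE s).deriv) t t'
end
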